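/- arXiv:1412.6900 — 5 statements merged into one kernel-verified Lean document; each statement's English description precedes it below -/
import Mathlib

section
/- Let K be a number field with ring of integers O_K and let ρ be an element of the finite adele ring A_{K,f}. Then the closure in A_{K,f} of the orbit {a·ρ : a ∈ K*, a totally positive} equals the set of all σ ∈ A_{K,f} such that for every finite place v of K, ρ_v = 0 implies σ_v = 0. -/
/-!
The orbit lies in the closed set `Z = {σ | ∀ v, ρ_v = 0 → σ_v = 0}`. Conversely, `σ ∈ Z` is
approximated by `τ ρ`, where `τ_v = σ_v / ρ_v` at finitely many places and `τ_v = 0` elsewhere,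
so `Z ⊆ closure (𝔸_f ρ)`; it remains to see that `K*₊` is dense in `𝔸_f`. The sets
`r • ∏ᵥ 𝒪ᵥ` (`r ≠ 0`) form a basis of neighbourhoods of `0`, and `𝔸_f = K + N • ∏ᵥ 𝒪ᵥ` by
density of `K` in each `K_v` and the Chinese remainder theorem. Adding a large multiple of the
integer `N` to an element of `K` makes it totally positive without leaving its coset.
-/

open IsDedekindDomain NumberField

open IsDedekindDomain.HeightOneSpectrum WithZero Topology nonZeroDivisors

namespace IsDedekindDomain.HeightOneSpectrum

variable {R : Type*} [CommRing R] [IsDedekindDomain R] {K : Type*} [Field K] [Algebra R K]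
  [IsFractionRing R K]

lemma finite_setOf_mem_asIdeal {r : R} (hr : r ≠ 0) :
    {v : HeightOneSpectrum R | r ∈ v.asIdeal}.Finite :=
  (Ideal.finite_factors (I := Ideal.span {r}) (by simpa [Ideal.zero_eq_bot] using hr)).subset
    fun _ hv => Ideal.dvd_span_singleton.mpr hv

lemma valuation_div_le_one {v : HeightOneSpectrum R} {x d : R}
    (h : v.intValuation x ≤ v.intValuation d) :
    v.valuation K (algebraMap R K x / algebraMap R K d) ≤ 1 := by
  rw [map_div₀, valuation_of_algebraMap, valuation_of_algebraMap]
  exact div_le_one_of_le₀ h zero_le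

theorem exists_valuation_sub_le_one (S : Finset (HeightOneSpectrum R))
    (b : HeightOneSpectrum R → K) :
    ∃ a : K, (∀ v ∈ S, v.valuation K (a - b v) ≤ 1) ∧ ∀ v ∉ S, v.valuation K a ≤ 1 := by
  classical
  -- `a = y / d`, where `d` is a common denominator of the `b v` and, by the Chinese remainder
  -- theorem, `y ≡ d * b v` at `v ∈ S` and `y ≡ 0` at the other primes dividing `d`, each modulo
  -- a power of `v` exceeding the one in `d`.
  obtain ⟨d, hd⟩ := IsLocalization.exist_integer_multiples R⁰ S b
  choose c hc using hd
  have hd0 : (d : R) ≠ 0 := nonZeroDivisors.coe_ne_zero d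
  let T := S ∪ (finite_setOf_mem_asIdeal hd0).toFinset
  let c' : HeightOneSpectrum R → R := fun v => if hv : v ∈ S then c v hv else 0
  choose e he using fun v : HeightOneSpectrum R =>
    exists_exp_neg_natCast_lt (v.intValuation_ne_zero _ hd0)
  obtain ⟨y, hy⟩ := exists_forall_sub_mem_ideal (s := T) (fun v => v.asIdeal) e
    (fun v _ => v.prime) (fun v _ w _ hvw h => hvw (HeightOneSpectrum.ext h)) (fun v => c' v)
  have hyc : ∀ v ∈ T, v.intValuation (y - c' v) ≤ v.intValuation d := fun v hv =>
    ((v.intValuation_le_pow_iff_mem _ _).mpr (hy v hv)).trans (he v).le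
  have hdK : algebraMap R K d ≠ 0 := (map_ne_zero_iff _ (IsFractionRing.injective R K)).mpr hd0
  refine ⟨algebraMap R K y / algebraMap R K d, fun v hv => ?_, fun v hv => ?_⟩
  · have : algebraMap R K y / algebraMap R K d - b v =
        algebraMap R K (y - c' v) / algebraMap R K d := by
      rw [map_sub, sub_div, show c' v = c v hv from dif_pos hv, hc v hv, Algebra.smul_def,
        mul_div_cancel_left₀ _ hdK]
    rw [this]
    exact valuation_div_le_one (hyc v (Finset.mem_union_left _ hv))
  · by_cases hvT : v ∈ T
    · simpa [c', hv] using valuation_div_le_one (K := K) (hyc v hvT)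
    · refine valuation_div_le_one (le_of_le_of_eq (v.intValuation_le_one y) ?_)
      refine ((v.intValuation_eq_one_iff_mem_primeCompl _).mpr fun h => hvT ?_).symm
      exact Finset.mem_union_right _ ((finite_setOf_mem_asIdeal hd0).mem_toFinset.mpr h)

lemma exists_valued_le_exp_subset {v : HeightOneSpectrum R} {t : Set (v.adicCompletion K)}
    (ht : t ∈ 𝓝 0) : ∃ n : ℕ, {x | Valued.v x ≤ exp (-(n : ℤ))} ⊆ t := by
  obtain ⟨γ, hγ⟩ := Valued.mem_nhds_zero.mp ht
  obtain ⟨n, hn⟩ :=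
    exists_exp_neg_natCast_lt (MonoidWithZeroHom.ValueGroup₀.embedding_unit_ne_zero γ)
  refine ⟨n, fun x hx => hγ ?_⟩
  rw [Set.mem_ofPred_eq, Valuation.restrict_lt_iff_lt_embedding]
  exact lt_of_le_of_lt hx hn

theorem exists_sub_mem_adicCompletionIntegers {v : HeightOneSpectrum R}
    (x : v.adicCompletion K) : ∃ b : K, x - b ∈ v.adicCompletionIntegers K := by
  have hopen : IsOpen {y : v.adicCompletion K | x - y ∈ v.adicCompletionIntegers K} :=
    (Valued.isOpen_valuationSubring _).preimage (continuous_const.sub continuous_id)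
  exact (denseRange_algebraMap K v).exists_mem_open hopen ⟨x, by simp⟩

end IsDedekindDomain.HeightOneSpectrum

namespace IsDedekindDomain.FiniteAdeleRing

variable {R : Type*} [CommRing R] [IsDedekindDomain R] {K : Type*} [Field K] [Algebra R K]
  [IsFractionRing R K]

variable (K) in
/-- `r • ∏ᵥ 𝒪ᵥ` -/
def integralMultiples (r : R) : AddSubgroup (FiniteAdeleRing R K) where
  carrier := {y | ∀ v, Valued.v (y v) ≤ v.valuation K (algebraMap R K r)}
  zero_mem' _ := (Valuation.map_zero _).trans_le zero_le
  add_mem' hx hy v := Valuation.map_add_le _ (hx v) (hy v)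
  neg_mem' hx v := (Valuation.map_neg _ _).trans_le (hx v)

theorem integralMultiples_mono {r s : R} (h : r ∣ s) :
    integralMultiples K s ≤ integralMultiples K r := by
  obtain ⟨t, rfl⟩ := h
  intro y hy v
  refine (hy v).trans ?_
  rw [map_mul, Valuation.map_mul, valuation_of_algebraMap (v := v) t]
  exact mul_le_of_le_one_right' (intValuation_le_one _ _)

theorem algebraMap_mem_integralMultiples (r : R) :
    algebraMap R (FiniteAdeleRing R K) r ∈ integralMultiples K r := fun v =>
  (valuedAdicCompletion_eq_valuation' v _).le

theorem exists_integralMultiples_subset {W : Set (FiniteAdeleRing R K)} (hW : W ∈ 𝓝 0) :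
    ∃ r : R, r ≠ 0 ∧ (integralMultiples K r : Set (FiniteAdeleRing R K)) ⊆ W := by
  have hopen : ∀ v : HeightOneSpectrum R,
      IsOpen (v.adicCompletionIntegers K : Set (v.adicCompletion K)) :=
    fun v => Valued.isOpen_valuationSubring _
  -- Near `0`, `𝔸_f` carries the product topology of `∏ᵥ 𝒪ᵥ`.
  have hW' := Filter.mem_map.mp <| (Filter.ext_iff.mp
    (RestrictedProduct.nhds_zero_eq_map_structureMap
      (R := fun v : HeightOneSpectrum R => v.adicCompletion K)
      (B := fun v => v.adicCompletionIntegers K) hopen) W).mp hW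
  rw [nhds_pi, Filter.mem_pi] at hW'
  obtain ⟨I, hI, t, ht, hIt⟩ := hW'
  have hball : ∀ v, ∃ n : ℕ, ∀ x : v.adicCompletionIntegers K,
      Valued.v (x : v.adicCompletion K) ≤ exp (-(n : ℤ)) → x ∈ t v := fun v => by
    obtain ⟨u, hu, hut⟩ := (mem_nhds_subtype _ _ _).mp (ht v)
    obtain ⟨n, hn⟩ := exists_valued_le_exp_subset hu
    exact ⟨n, fun x hx => hut (hn hx)⟩
  choose n hn using hball
  have hJ : ∏ v ∈ hI.toFinset, v.asIdeal ^ n v ≠ ⊥ :=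
    Finset.prod_ne_zero_iff.mpr fun v _ => pow_ne_zero _ v.ne_bot
  obtain ⟨r, hrJ, hr0⟩ := Submodule.exists_mem_ne_zero_of_ne_bot hJ
  refine ⟨r, hr0, fun y hy => ?_⟩
  have hint : ∀ v, Valued.v (y v) ≤ 1 := fun v =>
    (hy v).trans (by rw [valuation_of_algebraMap]; exact intValuation_le_one _ _)
  have hmem : (fun v => ⟨y v, hint v⟩ : ∀ v : HeightOneSpectrum R, v.adicCompletionIntegers K) ∈
      I.pi t := by
    intro v hv
    refine hn v _ ((hy v).trans ?_)
    rw [valuation_of_algebraMap, intValuation_le_pow_iff_mem]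
    exact Ideal.le_of_dvd (Finset.dvd_prod_of_mem _ (hI.mem_toFinset.mpr hv)) hrJ
  exact hIt hmem

theorem mem_closure_of_forall_exists_sub_mem {T : Set (FiniteAdeleRing R K)}
    {x : FiniteAdeleRing R K}
    (h : ∀ r : R, r ≠ 0 → ∃ y ∈ T, y - x ∈ integralMultiples K r) : x ∈ closure T := by
  refine mem_closure_iff_nhds.mpr fun W hW => ?_
  have : (· + x) ⁻¹' W ∈ 𝓝 0 :=
    (continuous_add_const x).continuousAt.preimage_mem_nhds (by rwa [zero_add])
  obtain ⟨r, hr, hrW⟩ := exists_integralMultiples_subset this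
  obtain ⟨y, hyT, hy⟩ := h r hr
  exact ⟨y, by simpa using hrW hy, hyT⟩

theorem exists_forall_sub_mem_adicCompletionIntegers (x : FiniteAdeleRing R K) :
    ∃ a : K, ∀ v, x v - a ∈ v.adicCompletionIntegers K := by
  have hS : {v | x v ∉ v.adicCompletionIntegers K}.Finite := Filter.eventually_cofinite.mp x.2
  choose b hb using fun v => exists_sub_mem_adicCompletionIntegers (x v)
  obtain ⟨a, haS, ha⟩ := exists_valuation_sub_le_one hS.toFinset b
  refine ⟨a, fun v => ?_⟩
  by_cases hv : v ∈ hS.toFinset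
  · have : x v - a = (x v - b v) + ((b v - a : K) : v.adicCompletion K) := by
      rw [show ((b v - a : K) : v.adicCompletion K) = b v - a from
        map_sub (algebraMap K (v.adicCompletion K)) _ _, sub_add_sub_cancel]
    rw [this]
    refine add_mem (hb v) ((valuedAdicCompletion_eq_valuation' v _).trans_le ?_)
    rw [Valuation.map_sub_swap]
    exact haS v hv
  · exact sub_mem (by simpa using hv) ((valuedAdicCompletion_eq_valuation' v a).trans_le (ha v hv))

theorem exists_sub_mem_integralMultiples (x : FiniteAdeleRing R K) {r : R} (hr : r ≠ 0) :
    ∃ a : K, x - algebraMap K _ a ∈ integralMultiples K r := by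
  set k := algebraMap R K r
  have hk : k ≠ 0 := (map_ne_zero_iff _ (IsFractionRing.injective R K)).mpr hr
  obtain ⟨a, ha⟩ := exists_forall_sub_mem_adicCompletionIntegers (algebraMap K _ k⁻¹ * x)
  refine ⟨k * a, fun v => ?_⟩
  have : (x - algebraMap K _ (k * a)) v =
      (k : v.adicCompletion K) * ((algebraMap K _ k⁻¹ * x - algebraMap K _ a) v) := by
    change x v - ((k * a : K) : v.adicCompletion K) =
      (k : v.adicCompletion K) * (((k⁻¹ : K) : v.adicCompletion K) * x v - a)
    rw [mul_sub, ← mul_assoc, ← adicCompletion.coe_mul, mul_inv_cancel₀ hk,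
      adicCompletion.coe_one, one_mul, ← adicCompletion.coe_mul]
  rw [this, Valuation.map_mul, valuedAdicCompletion_eq_valuation']
  exact mul_le_of_le_one_right' (ha v)

theorem isClosed_setOf_forall_eq_zero_imp (ρ : FiniteAdeleRing R K) :
    IsClosed {σ : FiniteAdeleRing R K | ∀ v, ρ v = 0 → σ v = 0} := by
  simp only [Set.ofPred_forall]
  exact isClosed_iInter fun v => isClosed_iInter fun _ =>
    isClosed_eq (RestrictedProduct.continuous_eval v) continuous_const

theorem subset_closure_range_mul (ρ : FiniteAdeleRing R K) :
    {σ : FiniteAdeleRing R K | ∀ v, ρ v = 0 → σ v = 0} ⊆ closure (Set.range (· * ρ)) := by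
  classical
  intro σ hσ
  refine mem_closure_of_forall_exists_sub_mem fun r hr => ?_
  set S := {v | σ v ∉ v.adicCompletionIntegers K} ∪ {v | r ∈ v.asIdeal}
  have hS : S.Finite :=
    (Filter.eventually_cofinite.mp σ.2).union (HeightOneSpectrum.finite_setOf_mem_asIdeal hr)
  let τ : FiniteAdeleRing R K := RestrictedProduct.mk (fun v => if v ∈ S then σ v / ρ v else 0)
    (Filter.eventually_cofinite.mpr (hS.subset fun v hv => by_contra fun h => hv (by simp [h])))
  refine ⟨τ * ρ, ⟨τ, rfl⟩, fun v => ?_⟩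
  change Valued.v ((if v ∈ S then σ v / ρ v else 0) * ρ v - σ v) ≤ _
  by_cases hv : v ∈ S
  · rw [if_pos hv]
    by_cases hρ : ρ v = 0
    · simp [hρ, hσ v hρ]
    · simp [div_mul_cancel₀ _ hρ]
  · rw [if_neg hv, zero_mul, zero_sub, Valuation.map_neg, valuation_of_algebraMap,
      (intValuation_eq_one_iff_mem_primeCompl _ _).mpr fun h => hv (Or.inr h)]
    exact not_not.mp fun h => hv (Or.inl h)

end IsDedekindDomain.FiniteAdeleRing

namespace NumberField

variable {K : Type*} [Field K] [NumberField K]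

theorem exists_totallyPositive_add_nat_mul (b : K) {N : ℕ} (hN : N ≠ 0) :
    ∃ m : ℕ, b + (m * N : ℕ) ≠ 0 ∧ ∀ φ : K →+* ℝ, 0 < φ (b + (m * N : ℕ)) := by
  obtain ⟨m, hm⟩ := exists_nat_gt (∑ ψ : K →+* ℂ, ‖ψ b‖)
  have hbound : ∀ ψ : K →+* ℂ, ‖ψ b‖ < (m * N : ℕ) := fun ψ => calc
    ‖ψ b‖ ≤ ∑ ψ : K →+* ℂ, ‖ψ b‖ :=
      Finset.single_le_sum (f := fun ψ : K →+* ℂ => ‖ψ b‖) (fun _ _ => norm_nonneg _)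
        (Finset.mem_univ ψ)
    _ < m := hm
    _ ≤ (m * N : ℕ) := by exact_mod_cast Nat.le_mul_of_pos_right m (Nat.pos_of_ne_zero hN)
  refine ⟨m, fun h => ?_, fun φ => ?_⟩
  · obtain ⟨ψ⟩ : Nonempty (K →+* ℂ) := inferInstance
    have := hbound ψ
    rw [eq_neg_of_add_eq_zero_left h, map_neg, map_natCast, norm_neg, Complex.norm_natCast] at this
    exact lt_irrefl _ this
  · have := hbound ((algebraMap ℝ ℂ).comp φ)
    simp only [RingHom.coe_comp, Function.comp_apply, Complex.coe_algebraMap, Complex.norm_real,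
      Real.norm_eq_abs] at this
    rw [map_add, map_natCast]
    linarith [neg_abs_le (φ b)]

theorem dense_algebraMap_totallyPositive :
    Dense (algebraMap K (FiniteAdeleRing (𝓞 K) K) '' {a | a ≠ 0 ∧ ∀ φ : K →+* ℝ, 0 < φ a}) := by
  refine fun x => FiniteAdeleRing.mem_closure_of_forall_exists_sub_mem fun r hr => ?_
  set N := Ideal.absNorm (Ideal.span {r})
  have hN : N ≠ 0 := by simpa [N, Ideal.absNorm_eq_zero_iff] using hr
  have hrN : r ∣ (N : 𝓞 K) := Ideal.mem_span_singleton.mp (Ideal.absNorm_mem _)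
  obtain ⟨b, hb⟩ :=
    FiniteAdeleRing.exists_sub_mem_integralMultiples x (r := (N : 𝓞 K)) (by exact_mod_cast hN)
  obtain ⟨m, hm0, hmpos⟩ := exists_totallyPositive_add_nat_mul b hN
  refine ⟨_, ⟨b + (m * N : ℕ), ⟨hm0, hmpos⟩, rfl⟩,
    FiniteAdeleRing.integralMultiples_mono hrN ?_⟩
  have : algebraMap K _ (b + (m * N : ℕ)) - x =
      m • algebraMap (𝓞 K) (FiniteAdeleRing (𝓞 K) K) N - (x - algebraMap K _ b) := by
    rw [map_add, map_natCast, map_natCast, nsmul_eq_mul]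
    push_cast
    ring
  rw [this]
  exact sub_mem (nsmul_mem (FiniteAdeleRing.algebraMap_mem_integralMultiples _) _) hb

end NumberField

/-- For a number field `K` and `ρ` in the finite adele ring of `K`, the closure
of the orbit `{a • ρ : a ∈ K*₊}` of `ρ` under multiplication by nonzero totally positive elements
of `K` equals the set of finite adeles `σ` such that `σ_v = 0` whenever `ρ_v = 0`. -/
theorem closure_totallyPositive_orbit_finiteAdele
    (K : Type*) [Field K] [NumberField K] (ρ : FiniteAdeleRing (𝓞 K) K) :
    closure {x : FiniteAdeleRing (𝓞 K) K |
        ∃ a : K, a ≠ 0 ∧ (∀ φ : K →+* ℝ, 0 < φ a) ∧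
          x = algebraMap K (FiniteAdeleRing (𝓞 K) K) a * ρ} =
      {σ : FiniteAdeleRing (𝓞 K) K |
        ∀ v : HeightOneSpectrum (𝓞 K), ρ v = 0 → σ v = 0} := by
  have horbit : {x : FiniteAdeleRing (𝓞 K) K |
        ∃ a : K, a ≠ 0 ∧ (∀ φ : K →+* ℝ, 0 < φ a) ∧
          x = algebraMap K (FiniteAdeleRing (𝓞 K) K) a * ρ} =
      (· * ρ) '' (algebraMap K _ '' {a | a ≠ 0 ∧ ∀ φ : K →+* ℝ, 0 < φ a}) := by
    ext
    simp [eq_comm, and_assoc]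
  rw [horbit]
  refine (closure_minimal ?_ (FiniteAdeleRing.isClosed_setOf_forall_eq_zero_imp ρ)).antisymm ?_
  · rintro _ ⟨_, ⟨a, -, rfl⟩, rfl⟩ v hv
    exact (mul_eq_zero_of_right _ hv : (a : v.adicCompletion K) * ρ v = 0)
  · refine (FiniteAdeleRing.subset_closure_range_mul ρ).trans
      (closure_minimal ?_ isClosed_closure)
    rintro _ ⟨τ, rfl⟩
    exact image_closure_subset_closure_image (continuous_mul_const ρ)
      ⟨τ, NumberField.dense_algebraMap_totallyPositive τ, rfl⟩
end

section
/- Let K be a number field with ring of integers O_K, let 𝔪 be a nonzero ideal of O_K, and let I be a nonzero fractional ideal of O_K. Then there exist a totally positive element a ∈ K* and nonzero integral ideals 𝔞 and 𝔟 of O_K, each coprime to 𝔪 (i.e., 𝔞 + 𝔪 = O_K and 𝔟 + 𝔪 = O_K), such that I = (aO_K) · 𝔞 · 𝔟^{-1} as fractional ideals. -/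
/-!
Write `I = d⁻¹ J` with `d ∈ 𝓞 K` and `J` an integral ideal. In a Dedekind domain
`J = J𝔪 + (c)` for some `c`, and this survives changing `c` modulo `J𝔪`; so `(c') = J𝔟` with
`𝔟 + 𝔪 = 𝓞 K` for every `c' ≡ c (mod J𝔪)`. Taking `c' = c + nN d` with `N = N(J𝔪) ∈ J𝔪` and
`n` large makes `a = c'/d = c/d + nN` totally positive, and then `I = a 𝔟⁻¹`.
-/

open NumberField nonZeroDivisors

namespace Ideal

variable {R : Type*} [CommRing R]

theorem sup_span_singleton_eq_of_sub_mem {I : Ideal R} {x y : R} (h : x - y ∈ I) :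
    I ⊔ span {x} = I ⊔ span {y} := by
  have key : ∀ {x y : R}, x - y ∈ I → I ⊔ span {x} ≤ I ⊔ span {y} := fun {x y} hxy =>
    sup_le le_sup_left <| (span_singleton_le_iff_mem _).2 <| by
      simpa using add_mem (mem_sup_left hxy) (mem_sup_right (mem_span_singleton_self y))
  exact le_antisymm (key h) (key (by simpa using I.neg_mem h))

theorem exists_span_singleton_eq_mul_of_mul_sup_span_eq [IsDedekindDomain R]
    {J m : Ideal R} {x : R} (hJ : J ≠ 0) (h : J * m ⊔ span {x} = J) :
    ∃ b, span {x} = J * b ∧ b ⊔ m = ⊤ := by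
  obtain ⟨b, hb⟩ := dvd_iff_le.2 (h ▸ le_sup_right : span {x} ≤ J)
  refine ⟨b, hb, mul_left_cancel₀ hJ ?_⟩
  rw [mul_sup, mul_top, ← hb, sup_comm, h]

theorem exists_forall_sub_mem_span_singleton_eq_mul_sup_eq_top [IsDedekindDomain R]
    {J m : Ideal R} (hJ : J ≠ 0) (hm : m ≠ 0) :
    ∃ c, ∀ x, x - c ∈ J * m → ∃ b, span {x} = J * b ∧ b ⊔ m = ⊤ := by
  obtain ⟨c, hc⟩ := IsDedekindDomain.exists_sup_span_eq mul_le_left (mul_ne_zero hJ hm)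
  refine ⟨c, fun x hx => exists_span_singleton_eq_mul_of_mul_sup_span_eq hJ ?_⟩
  rw [sup_span_singleton_eq_of_sub_mem hx, hc]

end Ideal

theorem FractionalIdeal.coeIdeal_eq_spanSingleton_mul_inv {R K : Type*} [CommRing R]
    [IsDedekindDomain R] [Field K] [Algebra R K] [IsFractionRing R K] {J b : Ideal R} {x : R}
    (h : Ideal.span {x} = J * b) (hb : b ≠ 0) :
    (J : FractionalIdeal R⁰ K) =
      spanSingleton R⁰ (algebraMap R K x) * (b : FractionalIdeal R⁰ K)⁻¹ := by
  rw [← coeIdeal_span_singleton, h, coeIdeal_mul, mul_assoc,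
    mul_inv_cancel₀ (coeIdeal_ne_zero.2 hb), mul_one]

theorem NumberField.eventually_add_natCast_ne_zero_and_totallyPositive {K : Type*} [Field K]
    [NumberField K] (x : K) :
    ∀ᶠ n : ℕ in Filter.atTop, x + n ≠ 0 ∧ ∀ φ : K →+* ℝ, 0 < φ (x + n) := by
  obtain ⟨M, hM⟩ := (Set.finite_range fun φ : K →+* ℂ => ‖φ x‖).bddAbove
  obtain ⟨B, hB⟩ := exists_nat_gt M
  have hlt : ∀ φ : K →+* ℂ, ∀ n : ℕ, B ≤ n → ‖φ x‖ < n := fun φ n hn =>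
    (hM ⟨φ, rfl⟩).trans_lt (hB.trans_le (by exact_mod_cast hn))
  refine Filter.eventually_atTop.2 ⟨B, fun n hn => ⟨fun h0 => ?_, fun φ => ?_⟩⟩
  · obtain ⟨φ⟩ : Nonempty (K →+* ℂ) := inferInstance
    have := hlt φ n hn
    rw [eq_neg_of_add_eq_zero_left h0] at this
    simp at this
  · have := hlt (Complex.ofRealHom.comp φ) n hn
    simp only [RingHom.comp_apply, Complex.ofRealHom_eq_coe, Complex.norm_real,
      Real.norm_eq_abs] at this
    rw [map_add, map_natCast]
    linarith [neg_abs_le (φ x)]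

/-- For a number field `K`, a nonzero ideal `𝔪` of `𝓞 K` and a nonzero
fractional ideal `I` of `𝓞 K`, there are a nonzero totally positive `a ∈ K` and nonzero
integral ideals `𝔞, 𝔟`, both coprime to `𝔪`, with `I = (a) 𝔞 𝔟⁻¹`. -/
theorem exists_totallyPositive_coprime_factorization
    (K : Type*) [Field K] [NumberField K] (𝔪 : Ideal (𝓞 K)) (h𝔪 : 𝔪 ≠ 0)
    (I : FractionalIdeal (𝓞 K)⁰ K) (hI : I ≠ 0) :
    ∃ (a : K) (𝔞 𝔟 : Ideal (𝓞 K)), a ≠ 0 ∧ (∀ φ : K →+* ℝ, 0 < φ a) ∧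
      𝔞 ≠ 0 ∧ 𝔟 ≠ 0 ∧ 𝔞 + 𝔪 = ⊤ ∧ 𝔟 + 𝔪 = ⊤ ∧
      I = FractionalIdeal.spanSingleton (𝓞 K)⁰ a * (𝔞 : FractionalIdeal (𝓞 K)⁰ K) *
        (𝔟 : FractionalIdeal (𝓞 K)⁰ K)⁻¹ := by
  obtain ⟨d, J, hd, rfl⟩ := FractionalIdeal.exists_eq_spanSingleton_mul I
  have hJ : J ≠ 0 := by rintro rfl; simp at hI
  obtain ⟨c, hc⟩ := Ideal.exists_forall_sub_mem_span_singleton_eq_mul_sup_eq_top hJ h𝔪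
  set N := (J * 𝔪).absNorm
  have hN : 0 < N := Nat.pos_of_ne_zero (mt Ideal.absNorm_eq_zero_iff.1 (mul_ne_zero hJ h𝔪))
  obtain ⟨B, hB⟩ := Filter.eventually_atTop.1
    (eventually_add_natCast_ne_zero_and_totallyPositive ((c : K) / d))
  obtain ⟨ha0, hapos⟩ := hB (B * N) (Nat.le_mul_of_pos_right B hN)
  set c' : 𝓞 K := c + (B * N : ℕ) * d
  have hc' : c' - c ∈ J * 𝔪 := by
    rw [add_sub_cancel_left, Nat.cast_mul, mul_right_comm]
    exact Ideal.mul_mem_left _ _ (Ideal.absNorm_mem _)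
  obtain ⟨𝔟, h𝔟, h𝔟𝔪⟩ := hc c' hc'
  have ha : (c : K) / d + (B * N : ℕ) = c' / d := by
    simp only [c', map_add, map_mul, map_natCast]
    have hdK : (d : K) ≠ 0 := by simpa using hd
    field_simp
  rw [ha] at ha0 hapos
  have h𝔟0 : 𝔟 ≠ 0 := by
    rintro rfl
    rw [mul_zero, Ideal.zero_eq_bot, Ideal.span_singleton_eq_bot] at h𝔟
    simp [h𝔟] at ha0
  refine ⟨c' / d, ⊤, 𝔟, ha0, hapos, by simp, h𝔟0, by simp [Submodule.add_eq_sup], h𝔟𝔪, ?_⟩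
  rw [FractionalIdeal.coeIdeal_eq_spanSingleton_mul_inv h𝔟 h𝔟0, ← mul_assoc,
    FractionalIdeal.spanSingleton_mul_spanSingleton, FractionalIdeal.coeIdeal_top, mul_one,
    div_eq_inv_mul]
end

section
/- Let K be a number field of degree n over ℚ and let p be a rational prime such that pO_K is not a prime ideal of O_K. Then there exists a nonzero totally positive element a ∈ K* with 1 ≤ v_p(N_{K/ℚ}(a)) < n. -/
/-!
Let `𝔓` be a prime of `𝓞 K` above `p`. Its norm is `p ^ f` with `0 < f < n`, since `f = n`
would force `p 𝓞_K = 𝔓`. An element `a` with `(a) + 𝔓 p = 𝔓` generates `𝔓 C` with `C`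
coprime to `p`, so `v_p(N a) = f`. This condition depends only on `a` modulo `𝔓 p ∋ p ^ 2`,
so `a + m p ^ 2` satisfies it as well, and is totally positive for `m` large.
-/

open NumberField

namespace Ideal

variable {R : Type*} [CommRing R]

theorem isUnit_mk_of_sup_span_singleton_eq_top {I : Ideal R} {x : R} (h : I ⊔ span {x} = ⊤) :
    IsUnit (Quotient.mk I x) := by
  have := congrArg (map (Quotient.mk I)) h
  rwa [map_sup, map_quotient_self, bot_sup_eq, map_span, Set.image_singleton, map_top,
    span_singleton_eq_top] at this

theorem sup_span_singleton_add_eq {L : Ideal R} (a : R) {t : R} (ht : t ∈ L) :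
    span {a + t} ⊔ L = span {a} ⊔ L := by
  refine le_antisymm (sup_le ?_ le_sup_right) (sup_le ?_ le_sup_right) <;>
    rw [span_singleton_le_iff_mem]
  · exact add_mem (mem_sup_left (mem_span_singleton_self a)) (mem_sup_right ht)
  · simpa using sub_mem (mem_sup_left (mem_span_singleton_self (a + t))) (mem_sup_right ht)

variable [IsDedekindDomain R]

theorem exists_span_singleton_eq_mul_of_sup_mul_eq {J I : Ideal R} (hJ : J ≠ ⊥) {a : R}
    (ha : span {a} ⊔ J * I = J) : ∃ C, span {a} = J * C ∧ C ⊔ I = ⊤ := by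
  obtain ⟨C, hC⟩ := dvd_iff_le.mpr (ha ▸ le_sup_left : span {a} ≤ J)
  refine ⟨C, hC, mul_left_cancel₀ hJ ?_⟩
  rw [mul_sup, ← hC, mul_top, ha]

variable [Module.Free ℤ R] [Module.Finite ℤ R]

theorem not_dvd_absNorm_of_sup_span_eq_top {p : ℕ} [Fact p.Prime] {I : Ideal R} (hI : I ≠ ⊥)
    (h : I ⊔ span {(p : R)} = ⊤) : ¬ p ∣ absNorm I := by
  have := I.finiteQuotientOfFreeOfNeBot hI
  let _ := Fintype.ofFinite (R ⧸ I)
  rw [absNorm_apply, Submodule.cardQuot_apply, Nat.card_eq_fintype_card]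
  refine fun hp => not_isUnit_prime_of_dvd_card hp ?_
  simpa using isUnit_mk_of_sup_span_singleton_eq_top h

theorem eq_of_le_of_absNorm_eq {I J : Ideal R} (hI : I ≠ ⊥) (hle : I ≤ J)
    (h : absNorm I = absNorm J) : I = J := by
  obtain ⟨C, rfl⟩ := dvd_iff_le.mpr hle
  have hJ : absNorm J ≠ 0 := absNorm_eq_zero_iff.not.mpr (left_ne_zero_of_mul hI)
  rw [map_mul, Nat.mul_eq_left hJ, absNorm_eq_one_iff] at h
  rw [h, mul_top]

theorem padicValNat_absNorm_span_singleton_of_sup_mul_eq {p : ℕ} [Fact p.Prime] {P : Ideal R}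
    (hP : P ≠ ⊥) (hp : span {(p : R)} ≠ ⊤) {a : R} (ha : span {a} ⊔ P * span {(p : R)} = P) :
    padicValNat p (absNorm (span {a})) = padicValNat p (absNorm P) := by
  obtain ⟨C, hC, hCp⟩ := exists_span_singleton_eq_mul_of_sup_mul_eq hP ha
  have hC0 : C ≠ ⊥ := by
    rintro rfl
    exact hp (by simpa using hCp)
  rw [hC, map_mul, padicValNat.mul (absNorm_eq_zero_iff.not.mpr hP)
    (absNorm_eq_zero_iff.not.mpr hC0),
    padicValNat.eq_zero_of_not_dvd (not_dvd_absNorm_of_sup_span_eq_top hC0 hCp), add_zero]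

end Ideal

open Ideal Module

theorem exists_nat_forall_pos_add_mul {K : Type*} [Ring K] [Finite (K →+* ℝ)] (x : K) {d : ℕ}
    (hd : 0 < d) : ∃ m : ℕ, ∀ φ : K →+* ℝ, 0 < φ (x + m * d) := by
  have hd' : (0 : ℝ) < d := by exact_mod_cast hd
  refine (Filter.eventually_all (l := (Filter.atTop : Filter ℕ)).mpr fun φ => ?_).exists
  simpa using ((Filter.tendsto_atTop_add_const_left _ (φ x)
    (tendsto_natCast_atTop_atTop.atTop_mul_const hd')).eventually_gt_atTop 0)

namespace NumberField

variable {K : Type*} [Field K] [NumberField K]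

theorem padicValRat_norm_eq_padicValNat_absNorm (p : ℕ) (a : 𝓞 K) :
    padicValRat p (Algebra.norm ℚ (a : K)) = padicValNat p (absNorm (span {a})) := by
  rw [← Algebra.coe_norm_int, padicValRat.of_int, absNorm_span_singleton, padicValInt]

theorem exists_totallyPositive_padicValRat_norm_eq {p : ℕ} [Fact p.Prime] {P : Ideal (𝓞 K)}
    (hP : P ≠ ⊥) (hpP : (p : 𝓞 K) ∈ P) (hPtop : P ≠ ⊤) :
    ∃ b : 𝓞 K, (∀ φ : K →+* ℝ, 0 < φ b) ∧
      padicValRat p (Algebra.norm ℚ (b : K)) = padicValNat p (absNorm P) := by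
  have hp : span {(p : 𝓞 K)} ≠ ⊤ := fun h =>
    hPtop (top_le_iff.mp (h ▸ (span_singleton_le_iff_mem _).mpr hpP))
  have hp0 : span {(p : 𝓞 K)} ≠ ⊥ := by simp [(Fact.out : p.Prime).ne_zero]
  obtain ⟨a, ha⟩ :=
    IsDedekindDomain.exists_sup_span_eq (mul_le_left : P * span {(p : 𝓞 K)} ≤ P)
      (mul_ne_zero hP hp0)
  obtain ⟨m, hm⟩ := exists_nat_forall_pos_add_mul (a : K) (pow_pos (Fact.out : p.Prime).pos 2)
  have ht : ((m * p ^ 2 : ℕ) : 𝓞 K) ∈ P * span {(p : 𝓞 K)} := by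
    rw [Nat.cast_mul, Nat.cast_pow, sq]
    exact mul_mem_left _ _ (mul_mem_mul hpP (mem_span_singleton_self _))
  refine ⟨a + (m * p ^ 2 : ℕ), fun φ => by simpa using hm φ, ?_⟩
  rw [padicValRat_norm_eq_padicValNat_absNorm,
    padicValNat_absNorm_span_singleton_of_sup_mul_eq hP hp
      (by rw [sup_span_singleton_add_eq a ht, sup_comm, ha])]

theorem exists_isMaximal_absNorm_eq_pow_of_not_isPrime {p : ℕ} (hp : p.Prime)
    (hsplit : ¬ (span {(p : 𝓞 K)}).IsPrime) :
    ∃ P : Ideal (𝓞 K), P.IsMaximal ∧ (p : 𝓞 K) ∈ P ∧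
      ∃ f, 0 < f ∧ f < finrank ℚ K ∧ absNorm P = p ^ f := by
  have hnorm : absNorm (span {(p : 𝓞 K)}) = p ^ finrank ℚ K := by
    rw [absNorm_span_natCast, RingOfIntegers.rank]
  have hp0 : span {(p : 𝓞 K)} ≠ ⊥ := by simp [hp.ne_zero]
  have htop : span {(p : 𝓞 K)} ≠ ⊤ := by
    rw [Ne, ← absNorm_eq_one_iff, hnorm]
    exact (Nat.one_lt_pow finrank_pos.ne' hp.one_lt).ne'
  obtain ⟨P, hP, hle⟩ := exists_le_maximal _ htop
  obtain ⟨f, hfn, hf⟩ := (Nat.dvd_prime_pow hp).mp (hnorm ▸ absNorm_dvd_absNorm_of_le hle)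
  refine ⟨P, hP, hle (mem_span_singleton_self _), f, Nat.pos_of_ne_zero ?_, hfn.lt_of_ne ?_, hf⟩
  · rintro rfl
    exact hP.ne_top (absNorm_eq_one_iff.mp (by simpa using hf))
  · rintro rfl
    exact hsplit (eq_of_le_of_absNorm_eq hp0 hle (hnorm.trans hf.symm) ▸ hP.isPrime)

end NumberField

/-- If a rational prime `p` splits (i.e. `p 𝓞_K` is not prime) in a number
field `K` of degree `n`, then there is a nonzero totally positive `a ∈ K` with
`1 ≤ v_p(N_{K/ℚ}(a)) < n`. -/
theorem exists_totallyPositive_padicValRat_norm_lt_of_split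
    (K : Type*) [Field K] [NumberField K] (n : ℕ) (hn : n = Module.finrank ℚ K)
    (p : ℕ) (hp : p.Prime) (hsplit : ¬ (Ideal.span {(p : 𝓞 K)}).IsPrime) :
    ∃ a : K, a ≠ 0 ∧ (∀ φ : K →+* ℝ, 0 < φ a) ∧
      1 ≤ padicValRat p (Algebra.norm ℚ a) ∧ padicValRat p (Algebra.norm ℚ a) < (n : ℤ) := by
  have := Fact.mk hp
  obtain ⟨P, hP, hpP, f, hf0, hfn, hPf⟩ :=
    exists_isMaximal_absNorm_eq_pow_of_not_isPrime hp hsplit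
  have hP0 : P ≠ ⊥ := fun h => hp.ne_zero (by simpa [h] using hpP)
  obtain ⟨b, hpos, hval⟩ :=
    exists_totallyPositive_padicValRat_norm_eq hP0 hpP hP.ne_top
  rw [hPf, padicValNat.prime_pow] at hval
  refine ⟨b, fun hb => ?_, hpos, ?_, ?_⟩
  · rw [hb, Algebra.norm_zero, padicValRat.zero] at hval
    omega
  · rw [hval]; exact_mod_cast hf0
  · rw [hval, hn]; exact_mod_cast hfn
end

section
/- Let (θ_j)_{j ∈ ℕ} be a sequence of real numbers such that the family of real numbers consisting of 1 together with all θ_j (j ∈ ℕ) is linearly independent over ℚ. Then the cyclic subgroup of the topological group ∏_{j ∈ ℕ} ℝ/ℤ (with the product topology) generated by the element whose j-th coordinate is the class of θ_j modulo ℤ is dense in ∏_{j ∈ ℕ} ℝ/ℤ. -/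
/-!
Kronecker's theorem via Weyl equidistribution. Density in the product topology only has to be
checked on finitely many coordinates, i.e. for the orbit of `g = (θ_i mod ℤ)_{i ∈ I}` in a finite
torus. There the `ℚ`-independence of `1, θ_i` says exactly that every nontrivial character
`mFourier n` takes a value `≠ 1` at `g`, so its Birkhoff averages along the orbit are averages of a
geometric progression and tend to `0 = ∫ mFourier n`. Since the characters span a dense subspace of
`C(𝕋^I, ℂ)` and the averages are uniformly `1`-Lipschitz, the averages of every continuous function
tend to its Haar integral. A bump function supported in a nonempty open set has positive integral,
so it cannot vanish along the whole orbit.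
-/

open Filter Topology MeasureTheory Set

theorem dense_of_forall_dense_restrict {ι : Type*} {X : ι → Type*}
    [∀ i, TopologicalSpace (X i)] {s : Set (∀ i, X i)}
    (h : ∀ I : Finset ι, Dense (I.restrict '' s)) : Dense s := by
  refine dense_iff_inter_open.mpr fun U hU ⟨x, hxU⟩ => ?_
  obtain ⟨I, u, hxu, hIU⟩ := isOpen_pi_iff.mp hU x hxU
  obtain ⟨_, hyV, y, hys, rfl⟩ := dense_iff_inter_open.mp (h I) (pi univ fun i : I => u i)
    (isOpen_set_pi finite_univ fun i _ => (hxu i i.2).1) ⟨I.restrict x, fun i _ => (hxu i i.2).2⟩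
  exact ⟨y, hIU fun i hi => hyV ⟨i, hi⟩ (mem_univ _), hys⟩

lemma eq_zero_of_sum_mul_eq_intCast {ι : Type*} [Fintype ι] {θ : ι → ℝ}
    (hindep : LinearIndependent ℚ fun o : Option ι => o.elim (1 : ℝ) θ) {n : ι → ℤ} {z : ℤ}
    (h : ∑ i, n i * θ i = z) : n = 0 := by
  rw [Fintype.linearIndependent_iff] at hindep
  funext i
  have := hindep (fun o => o.elim (-z : ℚ) fun i => (n i : ℚ))
    (by simp [Fintype.sum_option, Rat.smul_def, h]) (some i)
  simpa using this

lemma tendsto_geom_sum_div_natCast_zero {𝕜 : Type*} [RCLike 𝕜] {ζ : 𝕜} (hζ : ‖ζ‖ ≤ 1)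
    (hζ1 : ζ ≠ 1) :
    Tendsto (fun N : ℕ => (∑ k ∈ Finset.range N, ζ ^ k) / N) atTop (𝓝 0) := by
  have hbound (N : ℕ) : ‖∑ k ∈ Finset.range N, ζ ^ k‖ ≤ 2 / ‖ζ - 1‖ := by
    rw [geom_sum_eq hζ1, norm_div]
    gcongr
    calc ‖ζ ^ N - 1‖ ≤ ‖ζ ^ N‖ + ‖(1 : 𝕜)‖ := norm_sub_le _ _
      _ ≤ 2 := by
        rw [norm_pow, norm_one]
        linarith [pow_le_one₀ (norm_nonneg ζ) hζ (n := N)]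
  refine squeeze_zero_norm (fun N => ?_) (tendsto_const_div_atTop_nhds_zero_nat (2 / ‖ζ - 1‖))
  rw [norm_div, RCLike.norm_natCast]
  gcongr
  exact hbound N

section BirkhoffAverage

lemma birkhoffAverage_smul {R α M : Type*} [Semifield R] [AddCommMonoid M] [Module R M]
    (f : α → α) (c : R) (g : α → M) :
    birkhoffAverage R f (c • g) = c • birkhoffAverage R f g := by
  funext n x
  simp only [birkhoffAverage, birkhoffSum, Pi.smul_apply, ← Finset.smul_sum]
  exact smul_comm _ _ _

lemma norm_birkhoffAverage_le {α E 𝕜 : Type*} [RCLike 𝕜] [NormedAddCommGroup E]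
    [NormedSpace 𝕜 E] (f : α → α) {g : α → E} {C : ℝ} (hC : 0 ≤ C) (hg : ∀ y, ‖g y‖ ≤ C)
    (n : ℕ) (x : α) : ‖birkhoffAverage 𝕜 f g n x‖ ≤ C := by
  rcases n.eq_zero_or_pos with rfl | hn
  · simpa using hC
  rw [birkhoffAverage, birkhoffSum, norm_smul, norm_inv, RCLike.norm_natCast,
    inv_mul_le_iff₀ (by exact_mod_cast hn)]
  calc ‖∑ k ∈ Finset.range n, g (f^[k] x)‖ ≤ ∑ k ∈ Finset.range n, C :=
        norm_sum_le_of_le _ fun k _ => hg _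
    _ = n * C := by simp

variable {X : Type*} [TopologicalSpace X] [CompactSpace X]

lemma lipschitzWith_birkhoffAverage_continuousMap (f : X → X) (n : ℕ) (x : X) :
    LipschitzWith 1 fun φ : C(X, ℂ) => birkhoffAverage ℂ f φ n x := by
  refine LipschitzWith.of_dist_le_mul fun φ ψ => ?_
  rw [NNReal.coe_one, one_mul, dist_eq_norm, ← Pi.sub_apply, ← Pi.sub_apply,
    ← birkhoffAverage_sub, ← ContinuousMap.coe_sub]
  exact norm_birkhoffAverage_le f dist_nonneg
    (fun y => ((φ - ψ).norm_coe_le_norm y).trans_eq (dist_eq_norm φ ψ).symm) n x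

variable [MeasurableSpace X] [OpensMeasurableSpace X]

lemma ContinuousMap.integrable (φ : C(X, ℂ)) (μ : Measure X) [IsFiniteMeasure μ] :
    Integrable φ μ :=
  φ.continuous.integrable_of_hasCompactSupport (HasCompactSupport.of_compactSpace _)

lemma lipschitzWith_integral_continuousMap (μ : Measure X) [IsProbabilityMeasure μ] :
    LipschitzWith 1 fun φ : C(X, ℂ) => ∫ y, φ y ∂μ := by
  refine LipschitzWith.of_dist_le_mul fun φ ψ => ?_
  rw [NNReal.coe_one, one_mul, dist_eq_norm, ← integral_sub (φ.integrable μ) (ψ.integrable μ)]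
  simpa using norm_integral_le_of_norm_le_const (μ := μ) (Eventually.of_forall fun y =>
    ((φ - ψ).norm_coe_le_norm y).trans_eq (dist_eq_norm φ ψ).symm)

theorem tendsto_birkhoffAverage_integral_of_dense_span (μ : Measure X) [IsProbabilityMeasure μ]
    (f : X → X) (x : X) {s : Set C(X, ℂ)} (hs : (Submodule.span ℂ s).topologicalClosure = ⊤)
    (h : ∀ φ ∈ s, Tendsto (birkhoffAverage ℂ f φ · x) atTop (𝓝 (∫ y, φ y ∂μ)))
    (φ : C(X, ℂ)) : Tendsto (birkhoffAverage ℂ f φ · x) atTop (𝓝 (∫ y, φ y ∂μ)) := by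
  let S : Submodule ℂ C(X, ℂ) :=
    { carrier := {φ | Tendsto (birkhoffAverage ℂ f φ · x) atTop (𝓝 (∫ y, φ y ∂μ))}
      zero_mem' := by simp [birkhoffAverage, birkhoffSum]
      add_mem' := fun {φ ψ} hφ hψ => by
        simpa [birkhoffAverage_add, integral_add (φ.integrable μ) (ψ.integrable μ)]
          using hφ.add hψ
      smul_mem' := fun c φ hφ => by
        simpa [birkhoffAverage_smul, integral_const_mul] using hφ.const_smul c }
  have hS : IsClosed (S : Set C(X, ℂ)) :=
    (LipschitzWith.uniformEquicontinuous _ 1 fun n =>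
      lipschitzWith_birkhoffAverage_continuousMap f n x).equicontinuous.isClosed_setOfPred_tendsto
      (lipschitzWith_integral_continuousMap μ).continuous
  exact Submodule.topologicalClosure_minimal _ (Submodule.span_le.mpr (show s ⊆ S from h)) hS
    (hs ▸ Submodule.mem_top)

theorem denseRange_iterate_of_tendsto_birkhoffAverage [T2Space X] (μ : Measure X)
    [IsFiniteMeasure μ] [μ.IsOpenPosMeasure] (f : X → X) (x : X)
    (h : ∀ φ : C(X, ℂ), Tendsto (birkhoffAverage ℂ f φ · x) atTop (𝓝 (∫ y, φ y ∂μ))) :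
    DenseRange fun k : ℕ => f^[k] x := by
  refine dense_iff_inter_open.mpr fun U hU ⟨y, hyU⟩ => ?_
  by_contra hmiss
  obtain ⟨φ, hφU, hφy, hφ01⟩ := exists_continuous_zero_one_of_isClosed hU.isClosed_compl
    isClosed_singleton (disjoint_singleton_right.mpr fun hy => hy hyU)
  let ψ : C(X, ℂ) := ⟨fun z => (φ z : ℂ), by fun_prop⟩
  have hψ_orbit (k : ℕ) : ψ (f^[k] x) = 0 := by
    have : f^[k] x ∈ Uᶜ := fun hk => hmiss ⟨_, hk, k, rfl⟩
    simp [ψ, hφU this]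
  have hψ_avg : (birkhoffAverage ℂ f ψ · x) = 0 := by
    funext n
    simp [birkhoffAverage, birkhoffSum, hψ_orbit]
  have hψ_int : ∫ z, ψ z ∂μ = 0 :=
    tendsto_nhds_unique (hψ_avg ▸ h ψ) tendsto_const_nhds
  have hφ_int : 0 < ∫ z, φ z ∂μ :=
    φ.continuous.integral_pos_of_hasCompactSupport_nonneg_nonzero
      (HasCompactSupport.of_compactSpace _) (fun z => (hφ01 z).1) (x := y)
      (by simp [hφy (mem_singleton y)])
  rw [show ∫ z, ψ z ∂μ = ((∫ z, φ z ∂μ : ℝ) : ℂ) from integral_complex_ofReal] at hψ_int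
  exact hφ_int.ne' (by exact_mod_cast hψ_int)

end BirkhoffAverage

namespace UnitAddTorus

variable {ι : Type*} [Fintype ι]

lemma mFourier_apply_eq_toCircle (n : ι → ℤ) (x : UnitAddTorus ι) :
    mFourier n x = AddCircle.toCircle (∑ i, n i • x i) := by
  simp only [mFourier, ContinuousMap.coe_mk, fourier_apply]
  induction (Finset.univ : Finset ι) using Finset.cons_induction with
  | empty => simp
  | cons i s hi ih => simp [Finset.prod_cons, Finset.sum_cons, AddCircle.toCircle_add, ih]

lemma mFourier_apply_add (n : ι → ℤ) (x y : UnitAddTorus ι) :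
    mFourier n (x + y) = mFourier n x * mFourier n y := by
  simp [mFourier_apply_eq_toCircle, smul_add, Finset.sum_add_distrib, AddCircle.toCircle_add]

lemma mFourier_apply_nsmul (n : ι → ℤ) (k : ℕ) (x : UnitAddTorus ι) :
    mFourier n (k • x) = mFourier n x ^ k := by
  simp [mFourier_apply_eq_toCircle, smul_comm _ k, ← Finset.smul_sum, AddCircle.toCircle_nsmul]

lemma mFourier_apply_eq_one_iff (n : ι → ℤ) (x : UnitAddTorus ι) :
    mFourier n x = 1 ↔ ∑ i, n i • x i = 0 := by
  rw [mFourier_apply_eq_toCircle, Circle.coe_eq_one, ← AddCircle.toCircle_zero,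
    (AddCircle.injective_toCircle one_ne_zero).eq_iff]

lemma integral_mFourier_eq_zero (μ : Measure (UnitAddTorus ι)) [μ.IsAddRightInvariant]
    {n : ι → ℤ} {g : UnitAddTorus ι} (hg : mFourier n g ≠ 1) : ∫ y, mFourier n y ∂μ = 0 := by
  have h := integral_add_right_eq_self (μ := μ) (mFourier n) g
  simp only [mFourier_apply_add, integral_mul_const] at h
  have : (∫ y, mFourier n y ∂μ) * (mFourier n g - 1) = 0 := by
    rw [mul_sub, mul_one, h, sub_self]
  exact (mul_eq_zero.mp this).resolve_right (sub_ne_zero.mpr hg)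

lemma birkhoffAverage_add_right_mFourier (n : ι → ℤ) (g : UnitAddTorus ι) (N : ℕ) :
    birkhoffAverage ℂ (· + g) (mFourier n) N 0 =
      (∑ k ∈ Finset.range N, mFourier n g ^ k) / N := by
  simp [birkhoffAverage, birkhoffSum, add_right_iterate_apply, mFourier_apply_nsmul,
    div_eq_inv_mul]

lemma tendsto_birkhoffAverage_mFourier (μ : Measure (UnitAddTorus ι)) [IsProbabilityMeasure μ]
    [μ.IsAddRightInvariant] {g : UnitAddTorus ι} (hg : ∀ n ≠ 0, mFourier n g ≠ 1)
    (n : ι → ℤ) :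
    Tendsto (birkhoffAverage ℂ (· + g) (mFourier n) · 0) atTop (𝓝 (∫ y, mFourier n y ∂μ)) := by
  rcases eq_or_ne n 0 with rfl | hn
  · simp only [mFourier_zero, ContinuousMap.coe_one, Pi.one_apply, integral_const,
      probReal_univ, one_smul]
    refine tendsto_const_nhds.congr' ((eventually_ne_atTop 0).mono fun N hN => ?_)
    simp only [birkhoffAverage_of_comp_eq ℂ (Pi.one_comp _) (Nat.cast_ne_zero.mpr hN),
      Pi.one_apply]
  · rw [integral_mFourier_eq_zero μ (hg n hn)]
    simp only [birkhoffAverage_add_right_mFourier]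
    exact tendsto_geom_sum_div_natCast_zero
      ((ContinuousMap.norm_coe_le_norm _ g).trans_eq mFourier_norm) (hg n hn)

theorem denseRange_nsmul_of_mFourier_ne_one {g : UnitAddTorus ι}
    (hg : ∀ n ≠ 0, mFourier n g ≠ 1) : DenseRange fun k : ℕ => k • g := by
  let μ : Measure (UnitAddTorus ι) := Measure.pi fun _ => AddCircle.haarAddCircle
  have h := tendsto_birkhoffAverage_integral_of_dense_span μ (· + g) 0 span_mFourier_closure_eq_top
    (by rintro _ ⟨n, rfl⟩; exact tendsto_birkhoffAverage_mFourier μ hg n)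
  simpa [add_right_iterate_apply] using
    denseRange_iterate_of_tendsto_birkhoffAverage μ (· + g) 0 h

theorem denseRange_nsmul_coe_of_linearIndependent {θ : ι → ℝ}
    (hindep : LinearIndependent ℚ fun o : Option ι => o.elim (1 : ℝ) θ) :
    DenseRange fun k : ℕ => k • fun i => (θ i : UnitAddCircle) := by
  refine denseRange_nsmul_of_mFourier_ne_one fun n hn h => hn ?_
  rw [mFourier_apply_eq_one_iff] at h
  have hsum : ((∑ i, n i * θ i : ℝ) : UnitAddCircle) = 0 := by
    rw [← h]
    simp [← zsmul_eq_mul, QuotientAddGroup.mk_sum]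
  obtain ⟨z, hz⟩ := (AddCircle.coe_eq_zero_iff 1).mp hsum
  exact eq_zero_of_sum_mul_eq_intCast hindep (by rw [← hz, zsmul_one])

end UnitAddTorus

/-- If `(θ_j)_{j ∈ ℕ}` are reals such that `1` together with the `θ_j` are
linearly independent over `ℚ`, then the cyclic subgroup of `∏_{j ∈ ℕ} ℝ/ℤ` generated by
`(θ_j mod ℤ)_j` is dense. -/
theorem dense_zmultiples_of_linearIndependent
    (θ : ℕ → ℝ)
    (hindep : LinearIndependent ℚ (fun o : Option ℕ => Option.elim o (1 : ℝ) θ)) :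
    Dense (AddSubgroup.zmultiples
      (fun j => ((θ j : ℝ) : AddCircle (1 : ℝ)) : ℕ → AddCircle (1 : ℝ)) :
        Set (ℕ → AddCircle (1 : ℝ))) := by
  refine dense_of_forall_dense_restrict fun I => ?_
  have hindepI : LinearIndependent ℚ fun o : Option I => o.elim (1 : ℝ) fun i => θ i := by
    convert hindep.comp (Option.map Subtype.val) (Option.map_injective Subtype.val_injective)
      using 1
    funext o
    cases o <;> rfl
  refine (UnitAddTorus.denseRange_nsmul_coe_of_linearIndependent hindepI).mono ?_
  rintro _ ⟨k, rfl⟩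
  exact ⟨k • fun j => (θ j : UnitAddCircle), ⟨k, natCast_zsmul _ _⟩, rfl⟩
end

section
/- Let K be a number field with ring of integers O_K, let A_{K,f}^* denote the group of units of the finite adele ring A_{K,f} with its usual idele topology, and let Ô_K^* denote the subgroup of A_{K,f}^* consisting of those ideles u such that the component u_v is a unit of the valuation ring O_v for every finite place v. Then the closure in A_{K,f}^* of the group of totally positive units of O_K equals the intersection of Ô_K^* with the closure in A_{K,f}^* of the group K*_+ of nonzero totally positive elements of K (embedded diagonally). -/
/-!
The integral ideles `Ô_K^*` form an open and closed subset of the finite ideles, so intersecting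
with them commutes with taking closures. It remains to see that a totally positive `a ∈ K*` lies in
`Ô_K^*` exactly when it is a unit of `𝓞 K`, because an element of `K` that is integral at every
finite place lies in `𝓞 K`; applied to `a` and `a⁻¹` this makes `a` a unit.
-/

open IsDedekindDomain IsDedekindDomain.HeightOneSpectrum NumberField

theorem IsClopen.inter_closure_eq {X : Type*} [TopologicalSpace X] {s t : Set X}
    (hs : IsClopen s) : s ∩ closure t = closure (s ∩ t) :=
  subset_antisymm hs.isOpen.inter_closure <|
    Set.subset_inter (closure_minimal Set.inter_subset_left hs.isClosed)
      (closure_mono Set.inter_subset_right)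

theorem RingHom.exists_units_eq_iff_mem_range {R K : Type*} [CommRing R] [Field K]
    {f : R →+* K} (hf : Function.Injective f) {a : K} (ha : a ≠ 0) :
    (∃ ε : Rˣ, f ε = a) ↔ a ∈ f.range ∧ a⁻¹ ∈ f.range := by
  constructor
  · rintro ⟨ε, rfl⟩
    exact ⟨⟨ε, rfl⟩, ⟨↑ε⁻¹, map_units_inv f ε⟩⟩
  · rintro ⟨⟨r, rfl⟩, ⟨s, hs⟩⟩
    have hrs : r * s = 1 := hf (by rw [map_mul, hs, mul_inv_cancel₀ ha, map_one])
    exact ⟨Units.mkOfMulEqOne r s hrs, rfl⟩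

namespace IsDedekindDomain.FiniteAdeleRing

variable {R K : Type*} [CommRing R] [IsDedekindDomain R] [Field K] [Algebra R K]
  [IsFractionRing R K]

variable (R K) in
def integralAdeles : Subring (FiniteAdeleRing R K) where
  carrier := {x | ∀ v, x v ∈ adicCompletionIntegers K v}
  mul_mem' hx hy v := mul_mem (hx v) (hy v)
  one_mem' _ := one_mem _
  add_mem' hx hy v := add_mem (hx v) (hy v)
  zero_mem' _ := zero_mem _
  neg_mem' hx v := neg_mem (hx v)

theorem mem_integralAdeles {x : FiniteAdeleRing R K} :
    x ∈ integralAdeles R K ↔ ∀ v, x v ∈ adicCompletionIntegers K v :=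
  Iff.rfl

theorem isOpen_integralAdeles : IsOpen (integralAdeles R K : Set (FiniteAdeleRing R K)) :=
  RestrictedProduct.isOpen_forall_mem fun _ => Valued.isOpen_valuationSubring _

theorem isClopen_integralAdeles : IsClopen (integralAdeles R K : Set (FiniteAdeleRing R K)) :=
  ⟨AddSubgroup.isClosed_of_isOpen (integralAdeles R K).toAddSubgroup isOpen_integralAdeles,
    isOpen_integralAdeles⟩

theorem isClopen_integralAdeles_units :
    IsClopen ((integralAdeles R K).units : Set (FiniteAdeleRing R K)ˣ) :=
  (isClopen_integralAdeles.preimage Units.continuous_val).inter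
    (isClopen_integralAdeles.preimage Units.continuous_coe_inv)

theorem algebraMap_mem_integralAdeles_iff (a : K) :
    algebraMap K (FiniteAdeleRing R K) a ∈ integralAdeles R K ↔ a ∈ (algebraMap R K).range := by
  simp only [mem_integralAdeles, algebraMap_apply, mem_adicCompletionIntegers,
    valuedAdicCompletion_eq_valuation']
  refine ⟨mem_integers_of_valuation_le_one K a, ?_⟩
  rintro ⟨r, rfl⟩ v
  exact v.valuation_le_one r

theorem mem_integralAdeles_units_iff_of_val_eq_algebraMap {u : (FiniteAdeleRing R K)ˣ} {a : K}
    (hu : (u : FiniteAdeleRing R K) = algebraMap K _ a) (ha : a ≠ 0) :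
    u ∈ (integralAdeles R K).units ↔ ∃ ε : Rˣ, algebraMap R K ε = a := by
  have hu_inv : ((u⁻¹ : (FiniteAdeleRing R K)ˣ) : FiniteAdeleRing R K) = algebraMap K _ a⁻¹ :=
    Units.inv_eq_of_mul_eq_one_right (by rw [hu, ← map_mul, mul_inv_cancel₀ ha, map_one])
  rw [Submonoid.mem_units_iff, Subring.mem_toSubmonoid, Subring.mem_toSubmonoid, hu, hu_inv,
    algebraMap_mem_integralAdeles_iff, algebraMap_mem_integralAdeles_iff,
    (algebraMap R K).exists_units_eq_iff_mem_range (IsFractionRing.injective R K) ha]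

end IsDedekindDomain.FiniteAdeleRing

open FiniteAdeleRing in
/-- For a number field `K`, the closure, inside the finite idele group of `K`,
of the group of totally positive units of `𝓞 K` equals the intersection of the subgroup `Ô_K^*`
of integral ideles (those ideles whose component at every finite place is a unit of the local
valuation ring) with the closure of the group `K*₊` of nonzero totally positive elements of `K`
(embedded diagonally). -/
theorem closure_totallyPositiveUnits_eq
    (K : Type*) [Field K] [NumberField K] :
    closure {u : (FiniteAdeleRing (𝓞 K) K)ˣ |
        ∃ ε : (𝓞 K)ˣ, (∀ φ : K →+* ℝ, 0 < φ (algebraMap (𝓞 K) K (ε : 𝓞 K))) ∧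
          (u : FiniteAdeleRing (𝓞 K) K) =
            algebraMap K (FiniteAdeleRing (𝓞 K) K) (algebraMap (𝓞 K) K (ε : 𝓞 K))} =
      {u : (FiniteAdeleRing (𝓞 K) K)ˣ |
          ∀ v : HeightOneSpectrum (𝓞 K),
            (u : FiniteAdeleRing (𝓞 K) K) v ∈ adicCompletionIntegers K v ∧
            ((u⁻¹ : (FiniteAdeleRing (𝓞 K) K)ˣ) : FiniteAdeleRing (𝓞 K) K) v ∈
              adicCompletionIntegers K v} ∩
        closure {u : (FiniteAdeleRing (𝓞 K) K)ˣ |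
          ∃ a : K, a ≠ 0 ∧ (∀ φ : K →+* ℝ, 0 < φ a) ∧
            (u : FiniteAdeleRing (𝓞 K) K) = algebraMap K (FiniteAdeleRing (𝓞 K) K) a} := by
  have integral_units_eq : {u : (FiniteAdeleRing (𝓞 K) K)ˣ | ∀ v : HeightOneSpectrum (𝓞 K),
      (u : FiniteAdeleRing (𝓞 K) K) v ∈ adicCompletionIntegers K v ∧
      ((u⁻¹ : (FiniteAdeleRing (𝓞 K) K)ˣ) : FiniteAdeleRing (𝓞 K) K) v ∈
        adicCompletionIntegers K v} = (integralAdeles (𝓞 K) K).units :=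
    Set.ext fun _ => forall_and
  rw [integral_units_eq, isClopen_integralAdeles_units.inter_closure_eq]
  congr 1
  ext u
  constructor
  · rintro ⟨ε, hpos, hu⟩
    have hε : algebraMap (𝓞 K) K ε ≠ 0 :=
      (map_ne_zero_iff _ (IsFractionRing.injective (𝓞 K) K)).2 ε.ne_zero
    exact ⟨(mem_integralAdeles_units_iff_of_val_eq_algebraMap hu hε).2 ⟨ε, rfl⟩, _, hε, hpos, hu⟩
  · rintro ⟨hu_int, a, ha, hpos, hu⟩
    obtain ⟨ε, rfl⟩ := (mem_integralAdeles_units_iff_of_val_eq_algebraMap hu ha).1 hu_int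
    exact ⟨ε, hpos, hu⟩
end
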